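/- (Bolza increment formula for Markovian strategies.) Let R : I × ℝⁿ × U → ℝ be bounded and Borel measurable. Let w̄ and w be Markovian strategies, μ̄ and μ solutions of the FPK equation for w̄ and for w respectively with the same initial law ϑ, and let p̄ be a bounded C^{1,2} function (with bounded ∂_t p̄, ∇_x p̄, ∇²_x p̄) satisfying ∂_s p̄_s(x) + ∇p̄_s(x)·f(s,x,w̄_s(x)) + β Δp̄_s(x) + R(s,x,w̄_s(x)) = 0 for all (s,x) and p̄_T = ℓ. Define the Bolza cost J[w] = ∫ ℓ dμ_T + ∫_0^T ∫ R(s,x,w_s(x)) dμ_s(x) ds and J[w̄] = ∫ ℓ dμ̄_T + ∫_0^T ∫ R(s,x,w̄_s(x)) dμ̄_s(x) ds. Then J[w] − J[w̄] = ∫_0^T ∫ [ (∇p̄_s(x)·f(s,x,w_s(x)) + R(s,x,w_s(x))) − (∇p̄_s(x)·f(s,x,w̄_s(x)) + R(s,x,w̄_s(x))) ] dμ_s(x) ds. -/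

import Mathlib

open MeasureTheory intervalIntegral

noncomputable section

/-- Euclidean space ℝⁿ. -/
abbrev Eu (n : ℕ) : Type := EuclideanSpace ℝ (Fin n)

/-- Laplacian of `φ` at `x`: the trace of the Hessian. -/
def lapl {n : ℕ} (φ : Eu n → ℝ) (x : Eu n) : ℝ :=
  ∑ i : Fin n, fderiv ℝ (fun y => fderiv ℝ φ y (EuclideanSpace.single i 1)) x
    (EuclideanSpace.single i 1)

/-- `η` is of class C^{1,2} (C¹ in time, C² in space) and bounded together with
`∂ₜη`, `∇ₓη` and `∇²ₓη`. -/
structure C12Bdd {n : ℕ} (η : ℝ → Eu n → ℝ) : Prop where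
  smooth_t : ∀ x, ContDiff ℝ 1 fun t => η t x
  smooth_x : ∀ t, ContDiff ℝ 2 (η t)
  bdd : ∃ C, ∀ t x, |η t x| ≤ C
  bdd_dt : ∃ C, ∀ t x, |deriv (fun s => η s x) t| ≤ C
  bdd_grad : ∃ C, ∀ t x, ‖gradient (η t) x‖ ≤ C
  bdd_hess : ∃ C, ∀ t x, ‖fderiv ℝ (fderiv ℝ (η t)) x‖ ≤ C

/-- `μ : [0,T] → P(ℝⁿ)` is a (distributional) solution of the Fokker–Planck–Kolmogorov
equation for the Markovian strategy `w`, drift `f`, diffusion constant `β`, with initial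
law `ϑ`. -/
def IsFPK {n m : ℕ} (T : ℝ) (f : ℝ → Eu n → Eu m → Eu n) (β : ℝ)
    (w : ℝ → Eu n → Eu m) (ϑ : Measure (Eu n)) (μ : ℝ → Measure (Eu n)) : Prop :=
  (∀ t, IsProbabilityMeasure (μ t)) ∧
  μ 0 = ϑ ∧
  (∀ φ : Eu n → ℝ, Continuous φ → (∃ C, ∀ x, |φ x| ≤ C) →
    Measurable fun t => ∫ x, φ x ∂μ t) ∧
  (∀ η : ℝ → Eu n → ℝ, C12Bdd η → ∀ t ∈ Set.Icc (0:ℝ) T,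
    (∫ x, η t x ∂μ t) - (∫ x, η 0 x ∂μ 0) =
      ∫ s in (0:ℝ)..t, ∫ x, (deriv (fun r => η r x) s
        + (inner ℝ (gradient (η s) x) (f s x (w s x)) : ℝ) + β * lapl (η s) x) ∂μ s)

/-!
Test the FPK equations of `μ` and `μb` against the adjoint state `pb` on `[0, T]`; both start
from `∫ pb 0 ∂ϑ` and end at `∫ ℓ ∂μ T`, resp. `∫ ℓ ∂μb T`. Along `w` the backward equation of `pb`
turns the generator into `H(w) - H(wb) - R(w)`, with `H` the Hamiltonian evaluated at the gradient
of `pb`; along `wb` it becomes `-R(wb)`. Subtracting the two identities gives the formula.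
Splitting the double integrals needs the integrands to be bounded and jointly measurable, and
`t ↦ μ t` to be a measurable kernel, which follows from the measurability of `t ↦ ∫ φ ∂μ t` for
bounded continuous `φ` by approximating indicators of closed sets.
-/

open Function

section KernelMeasurability

variable {α X : Type*} [MeasurableSpace α] [MeasurableSpace X] {μ : α → Measure X}
  [∀ a, IsProbabilityMeasure (μ a)]

theorem measurable_measure_of_measurable_integral [TopologicalSpace X] [HasOuterApproxClosed X]
    [BorelSpace X]
    (h : ∀ φ : X → ℝ, Continuous φ → (∃ C, ∀ x, |φ x| ≤ C) → Measurable fun a => ∫ x, φ x ∂μ a) :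
    Measurable μ := by
  refine .measure_of_isPiSystem_of_isProbabilityMeasure (S := {F | IsClosed F})
    ((BorelSpace.measurable_eq (α := X)).trans borel_eq_generateFrom_isClosed) isPiSystem_isClosed
    fun F hF => ?_
  refine measurable_of_tendsto_metrizable (fun k => ?_)
    (tendsto_pi_nhds.2 fun a => HasOuterApproxClosed.tendsto_lintegral_apprSeq hF (μ a))
  have happr : Measurable fun a => ∫ x, (hF.apprSeq k x : ℝ) ∂μ a :=
    h _ (NNReal.continuous_coe.comp (hF.apprSeq k).continuous)
      ⟨1, fun x => by simpa using HasOuterApproxClosed.apprSeq_apply_le_one hF k x⟩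
  convert ENNReal.measurable_ofReal.comp happr using 1
  funext a
  rw [comp_apply, ← BoundedContinuousFunction.toReal_lintegral_coe_eq_integral]
  exact (ENNReal.ofReal_toReal
    (BoundedContinuousFunction.lintegral_lt_top_of_nnreal (μ a) _).ne).symm

theorem stronglyMeasurable_integral_of_measurable {E : Type*} [NormedAddCommGroup E]
    [NormedSpace ℝ E] (hμ : Measurable μ) {g : α → X → E} (hg : StronglyMeasurable (uncurry g)) :
    StronglyMeasurable fun a => ∫ x, g a x ∂μ a :=
  have : ProbabilityTheory.IsMarkovKernel ⟨μ, hμ⟩ := ⟨inferInstance⟩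
  hg.integral_kernel_prod_right (κ := ⟨μ, hμ⟩)

end KernelMeasurability

section TimeIntegral

variable {X : Type*} [MeasurableSpace X] {μ : ℝ → Measure X} [∀ s, IsProbabilityMeasure (μ s)]

theorem intervalIntegrable_integral_of_bounded (hμ : Measurable μ) {g : ℝ → X → ℝ}
    (hg : Measurable (uncurry g)) (hgC : ∃ C, ∀ s x, |g s x| ≤ C) (a b : ℝ) :
    IntervalIntegrable (fun s => ∫ x, g s x ∂μ s) volume a b := by
  obtain ⟨C, hC⟩ := hgC
  refine (intervalIntegrable_const (c := C)).mono_fun'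
    (stronglyMeasurable_integral_of_measurable hμ hg.stronglyMeasurable).aestronglyMeasurable
    (ae_of_all _ fun s => ?_)
  simpa using norm_integral_le_of_norm_le_const (μ := μ s)
    (ae_of_all _ fun x => (Real.norm_eq_abs _).trans_le (hC s x))

theorem integrable_section_of_bounded {g : ℝ → X → ℝ} (hg : Measurable (uncurry g))
    (hgC : ∃ C, ∀ s x, |g s x| ≤ C) (s : ℝ) : Integrable (g s) (μ s) := by
  obtain ⟨C, hC⟩ := hgC
  exact .of_bound (hg.comp measurable_prodMk_left).aestronglyMeasurable C
    (ae_of_all _ fun x => (Real.norm_eq_abs _).trans_le (hC s x))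

theorem intervalIntegral_integral_sub (hμ : Measurable μ) {g h : ℝ → X → ℝ}
    (hg : Measurable (uncurry g)) (hgC : ∃ C, ∀ s x, |g s x| ≤ C)
    (hh : Measurable (uncurry h)) (hhC : ∃ C, ∀ s x, |h s x| ≤ C) (a b : ℝ) :
    ∫ s in a..b, ∫ x, (g s x - h s x) ∂μ s =
      (∫ s in a..b, ∫ x, g s x ∂μ s) - ∫ s in a..b, ∫ x, h s x ∂μ s := by
  rw [← intervalIntegral.integral_sub (intervalIntegrable_integral_of_bounded hμ hg hgC a b)
    (intervalIntegrable_integral_of_bounded hμ hh hhC a b)]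
  refine intervalIntegral.integral_congr fun s _ => ?_
  exact integral_sub (integrable_section_of_bounded hg hgC s)
    (integrable_section_of_bounded hh hhC s)

end TimeIntegral

theorem norm_fderiv_eq_norm_gradient {F : Type*} [NormedAddCommGroup F] [InnerProductSpace ℝ F]
    [CompleteSpace F] (φ : F → ℝ) (x : F) : ‖fderiv ℝ φ x‖ = ‖gradient φ x‖ := by
  rw [← toDual_gradient, LinearIsometryEquiv.norm_map]

namespace C12Bdd

variable {n : ℕ} {η : ℝ → Eu n → ℝ}

theorem continuous_uncurry (hη : C12Bdd η) : Continuous (uncurry η) := by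
  obtain ⟨C, hC⟩ := hη.bdd_grad
  refine continuous_prod_of_dense_continuous_lipschitzWith' _ C.toNNReal dense_univ
    (fun t => lipschitzWith_of_nnnorm_fderiv_le ((hη.smooth_x t).differentiable two_ne_zero)
      fun x => ?_) fun x _ => (hη.smooth_t x).continuous
  rw [← NNReal.coe_le_coe, coe_nnnorm, Real.coe_toNNReal', norm_fderiv_eq_norm_gradient]
  exact le_max_of_le_left (hC t x)

theorem measurable_gradient (hη : C12Bdd η) :
    Measurable fun p : ℝ × Eu n => gradient (η p.1) p.2 :=
  (InnerProductSpace.toDual ℝ (Eu n)).symm.continuous.measurable.comp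
    (measurable_fderiv_with_param ℝ hη.continuous_uncurry)

end C12Bdd

section Hamiltonian

variable {n m : ℕ} (f : ℝ → Eu n → Eu m → Eu n) (R : ℝ → Eu n → Eu m → ℝ)

def hamiltonian (s : ℝ) (x p : Eu n) (u : Eu m) : ℝ :=
  (inner ℝ p (f s x u) : ℝ) + R s x u

variable {f R}

theorem abs_hamiltonian_le {Cf CR Cp : ℝ} (hf : ∀ s x u, ‖f s x u‖ ≤ Cf)
    (hR : ∀ s x u, |R s x u| ≤ CR) {s : ℝ} {x p : Eu n} (hp : ‖p‖ ≤ Cp) (u : Eu m) :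
    |hamiltonian f R s x p u| ≤ Cp * Cf + CR := by
  refine (abs_add_le _ _).trans (add_le_add ?_ (hR s x u))
  exact (abs_real_inner_le_norm _ _).trans
    (mul_le_mul hp (hf s x u) (norm_nonneg _) ((norm_nonneg _).trans hp))

theorem measurable_hamiltonian_comp (hf : Measurable fun q : ℝ × Eu n × Eu m => f q.1 q.2.1 q.2.2)
    (hR : Measurable fun q : ℝ × Eu n × Eu m => R q.1 q.2.1 q.2.2)
    {p : ℝ → Eu n → Eu n} (hp : Measurable (uncurry p))
    {w : ℝ → Eu n → Eu m} (hw : Measurable (uncurry w)) :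
    Measurable fun q : ℝ × Eu n => hamiltonian f R q.1 q.2 (p q.1 q.2) (w q.1 q.2) := by
  have hqw : Measurable fun q : ℝ × Eu n => (q.1, q.2, w q.1 q.2) :=
    measurable_fst.prodMk (measurable_snd.prodMk hw)
  exact (hp.inner (hf.comp hqw)).add (hR.comp hqw)

end Hamiltonian

theorem IsFPK.integral_terminal_eq {n m : ℕ} {T β : ℝ} (hT : 0 ≤ T)
    {f : ℝ → Eu n → Eu m → Eu n}
    (hf : Measurable fun q : ℝ × Eu n × Eu m => f q.1 q.2.1 q.2.2)
    (hfC : ∃ C, ∀ t x u, ‖f t x u‖ ≤ C)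
    {R : ℝ → Eu n → Eu m → ℝ} (hR : Measurable fun q : ℝ × Eu n × Eu m => R q.1 q.2.1 q.2.2)
    (hRC : ∃ C, ∀ t x u, |R t x u| ≤ C)
    {wb w : ℝ → Eu n → Eu m} (hwb : Measurable (uncurry wb)) (hw : Measurable (uncurry w))
    {ϑ : Measure (Eu n)} {μ : ℝ → Measure (Eu n)} (hFPK : IsFPK T f β w ϑ μ)
    {pb : ℝ → Eu n → ℝ} (hpb : C12Bdd pb)
    (hpde : ∀ s ∈ Set.Icc (0:ℝ) T, ∀ x : Eu n,
      deriv (fun r => pb r x) s + (inner ℝ (gradient (pb s) x) (f s x (wb s x)) : ℝ)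
        + β * lapl (pb s) x + R s x (wb s x) = 0)
    {ℓ : Eu n → ℝ} (hterm : ∀ x, pb T x = ℓ x) :
    ∫ x, ℓ x ∂μ T = ∫ x, pb 0 x ∂ϑ
      + (∫ s in (0:ℝ)..T, ∫ x, (hamiltonian f R s x (gradient (pb s) x) (w s x)
          - hamiltonian f R s x (gradient (pb s) x) (wb s x)) ∂μ s)
      - ∫ s in (0:ℝ)..T, ∫ x, R s x (w s x) ∂μ s := by
  obtain ⟨hprob, rfl, hcont, hweak⟩ := hFPK
  have hμ : Measurable μ := measurable_measure_of_measurable_integral hcont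
  obtain ⟨Cf, hCf⟩ := hfC
  obtain ⟨CR, hCR⟩ := hRC
  obtain ⟨Cp, hCp⟩ := hpb.bdd_grad
  have hHmeas (v : ℝ → Eu n → Eu m) (hv : Measurable (uncurry v)) :
      Measurable fun q : ℝ × Eu n =>
        hamiltonian f R q.1 q.2 (gradient (pb q.1) q.2) (v q.1 q.2) :=
    measurable_hamiltonian_comp hf hR (p := fun s => gradient (pb s)) hpb.measurable_gradient hv
  have hHbdd (s x) (u : Eu m) : |hamiltonian f R s x (gradient (pb s) x) u| ≤ Cp * Cf + CR :=
    abs_hamiltonian_le hCf hCR (hCp s x) u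
  set G : ℝ → Eu n → ℝ := fun s x => hamiltonian f R s x (gradient (pb s) x) (w s x)
    - hamiltonian f R s x (gradient (pb s) x) (wb s x) with hG
  have hGmeas : Measurable (uncurry G) := (hHmeas w hw).sub (hHmeas wb hwb)
  have hGbdd : ∃ C, ∀ s x, |G s x| ≤ C :=
    ⟨2 * (Cp * Cf + CR), fun s x =>
      (abs_sub _ _).trans (by linarith [hHbdd s x (w s x), hHbdd s x (wb s x)])⟩
  have hRw : Measurable fun q : ℝ × Eu n => R q.1 q.2 (w q.1 q.2) :=
    hR.comp (measurable_fst.prodMk (measurable_snd.prodMk hw))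
  have hgenerator : ∀ s ∈ Set.uIcc 0 T, ∫ x, (deriv (fun r => pb r x) s
      + (inner ℝ (gradient (pb s) x) (f s x (w s x)) : ℝ) + β * lapl (pb s) x) ∂μ s
      = ∫ x, (G s x - R s x (w s x)) ∂μ s := by
    intro s hs
    refine integral_congr_ae (ae_of_all _ fun x => ?_)
    have := hpde s (by rwa [Set.uIcc_of_le hT] at hs) x
    simp only [hG, hamiltonian]
    linarith
  have hFPKT := hweak pb hpb T ⟨hT, le_rfl⟩
  rw [intervalIntegral.integral_congr hgenerator, intervalIntegral_integral_sub hμ hGmeas hGbdd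
    (h := fun s x => R s x (w s x)) hRw ⟨CR, fun s x => hCR s x _⟩] at hFPKT
  simp only [hterm] at hFPKT
  linarith

theorem bolza_increment_formula_markovian_general
    {n m : ℕ} (T : ℝ) (hT : 0 < T)
    (f : ℝ → Eu n → Eu m → Eu n)
    (hfmeas : Measurable fun p : ℝ × Eu n × Eu m => f p.1 p.2.1 p.2.2)
    (hfbdd : ∃ C, ∀ t x υ, ‖f t x υ‖ ≤ C)
    (β : ℝ)
    (ℓ : Eu n → ℝ)
    (R : ℝ → Eu n → Eu m → ℝ)
    (hRmeas : Measurable fun p : ℝ × Eu n × Eu m => R p.1 p.2.1 p.2.2)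
    (hRbdd : ∃ C, ∀ t x υ, |R t x υ| ≤ C)
    (wb : ℝ → Eu n → Eu m)
    (hwbmeas : Measurable fun p : ℝ × Eu n => wb p.1 p.2)
    (w : ℝ → Eu n → Eu m)
    (hwmeas : Measurable fun p : ℝ × Eu n => w p.1 p.2)
    (ϑ : Measure (Eu n)) (μb μ : ℝ → Measure (Eu n))
    (hFPKb : IsFPK T f β wb ϑ μb) (hFPK : IsFPK T f β w ϑ μ)
    (pb : ℝ → Eu n → ℝ) (hpb : C12Bdd pb)
    (hpde : ∀ s ∈ Set.Icc (0:ℝ) T, ∀ x : Eu n,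
      deriv (fun r => pb r x) s + (inner ℝ (gradient (pb s) x) (f s x (wb s x)) : ℝ)
        + β * lapl (pb s) x + R s x (wb s x) = 0)
    (hterm : ∀ x, pb T x = ℓ x) :
    ((∫ x, ℓ x ∂μ T) + ∫ s in (0:ℝ)..T, ∫ x, R s x (w s x) ∂μ s)
      - ((∫ x, ℓ x ∂μb T) + ∫ s in (0:ℝ)..T, ∫ x, R s x (wb s x) ∂μb s) =
      ∫ s in (0:ℝ)..T, ∫ x,
        (((inner ℝ (gradient (pb s) x) (f s x (w s x)) : ℝ) + R s x (w s x))
          - ((inner ℝ (gradient (pb s) x) (f s x (wb s x)) : ℝ) + R s x (wb s x))) ∂μ s := by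
  have hcost := hFPK.integral_terminal_eq hT.le hfmeas hfbdd hRmeas hRbdd hwbmeas hwmeas hpb
    hpde hterm
  have hcostb := hFPKb.integral_terminal_eq hT.le hfmeas hfbdd hRmeas hRbdd hwbmeas hwbmeas hpb
    hpde hterm
  simp only [sub_self, integral_zero, intervalIntegral.integral_zero, add_zero] at hcostb
  rw [hcost, hcostb]
  simp only [hamiltonian]
  ring

theorem bolza_increment_formula_markovian
    {n m : ℕ} (hn : 1 ≤ n) (hm : 1 ≤ m) (T : ℝ) (hT : 0 < T)
    (U : Set (Eu m)) (hUne : U.Nonempty) (hUcp : IsCompact U)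
    (f : ℝ → Eu n → Eu m → Eu n)
    (hfmeas : Measurable fun p : ℝ × Eu n × Eu m => f p.1 p.2.1 p.2.2)
    (hfbdd : ∃ C, ∀ t x υ, ‖f t x υ‖ ≤ C)
    (β : ℝ) (hβ : 0 < β)
    (ℓ : Eu n → ℝ) (hℓ : ContDiff ℝ 2 ℓ) (hℓbdd : ∃ C, ∀ x, |ℓ x| ≤ C)
    (R : ℝ → Eu n → Eu m → ℝ)
    (hRmeas : Measurable fun p : ℝ × Eu n × Eu m => R p.1 p.2.1 p.2.2)
    (hRbdd : ∃ C, ∀ t x υ, |R t x υ| ≤ C)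
    (wb : ℝ → Eu n → Eu m)
    (hwbmeas : Measurable fun p : ℝ × Eu n => wb p.1 p.2)
    (hwbU : ∀ t x, wb t x ∈ U)
    (w : ℝ → Eu n → Eu m)
    (hwmeas : Measurable fun p : ℝ × Eu n => w p.1 p.2)
    (hwU : ∀ t x, w t x ∈ U)
    (ϑ : Measure (Eu n)) (μb μ : ℝ → Measure (Eu n))
    (hFPKb : IsFPK T f β wb ϑ μb) (hFPK : IsFPK T f β w ϑ μ)
    (pb : ℝ → Eu n → ℝ) (hpb : C12Bdd pb)
    (hpde : ∀ s ∈ Set.Icc (0:ℝ) T, ∀ x : Eu n,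
      deriv (fun r => pb r x) s + (inner ℝ (gradient (pb s) x) (f s x (wb s x)) : ℝ)
        + β * lapl (pb s) x + R s x (wb s x) = 0)
    (hterm : ∀ x, pb T x = ℓ x) :
    ((∫ x, ℓ x ∂μ T) + ∫ s in (0:ℝ)..T, ∫ x, R s x (w s x) ∂μ s)
      - ((∫ x, ℓ x ∂μb T) + ∫ s in (0:ℝ)..T, ∫ x, R s x (wb s x) ∂μb s) =
      ∫ s in (0:ℝ)..T, ∫ x,
        (((inner ℝ (gradient (pb s) x) (f s x (w s x)) : ℝ) + R s x (w s x))
          - ((inner ℝ (gradient (pb s) x) (f s x (wb s x)) : ℝ) + R s x (wb s x))) ∂μ s :=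
  bolza_increment_formula_markovian_general T hT f hfmeas hfbdd β ℓ R hRmeas hRbdd wb hwbmeas w
    hwmeas ϑ μb μ hFPKb hFPK pb hpb hpde hterm
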